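/- arXiv:2311.06528 — 6 statements merged into one kernel-verified Lean document; each statement's English description precedes it below -/
import Mathlib

section
/- Consider the flat-disk state equations with any measurable-in-time inputs: for all t, ω₁' = -ω₁/(I₂+I₃)·(u₁+u₂) - ((I₃-I₂)/(I₂+I₃))·ω₂ω₃, ω₂' = -(ω₂/I₂)·u₁ - ω₃ω₁, ω₃' = -(ω₃/I₃)·u₂ + ω₁ω₂, I₂' = u₁, I₃' = u₂, with I₂(t) > 0 and I₃(t) > 0. Then the squared norm of the body-frame angular momentum, t ↦ ((I₂(t)+I₃(t))·ω₁(t))² + (I₂(t)·ω₂(t))² + (I₃(t)·ω₃(t))², is constant in t, whatever the inputs u₁, u₂. -/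
/-- Along the flat-disk state equations, whatever the inputs `u₁, u₂`, the squared norm
of the body-frame angular momentum
`((I₂+I₃)ω₁)² + (I₂ω₂)² + (I₃ω₃)²` is constant in time. -/
theorem flat_disk_angular_momentum_norm_constant
    (ω₁ ω₂ ω₃ I₂ I₃ u₁ u₂ : ℝ → ℝ)
    (hI₂pos : ∀ t, 0 < I₂ t) (hI₃pos : ∀ t, 0 < I₃ t)
    (hω₁ : ∀ t, HasDerivAt ω₁
      (-(ω₁ t) / (I₂ t + I₃ t) * (u₁ t + u₂ t)
        - (I₃ t - I₂ t) / (I₂ t + I₃ t) * (ω₂ t * ω₃ t)) t)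
    (hω₂ : ∀ t, HasDerivAt ω₂ (-(ω₂ t / I₂ t) * u₁ t - ω₃ t * ω₁ t) t)
    (hω₃ : ∀ t, HasDerivAt ω₃ (-(ω₃ t / I₃ t) * u₂ t + ω₁ t * ω₂ t) t)
    (hI₂ : ∀ t, HasDerivAt I₂ (u₁ t) t)
    (hI₃ : ∀ t, HasDerivAt I₃ (u₂ t) t) :
    ∀ t s, ((I₂ t + I₃ t) * ω₁ t) ^ 2 + (I₂ t * ω₂ t) ^ 2 + (I₃ t * ω₃ t) ^ 2
         = ((I₂ s + I₃ s) * ω₁ s) ^ 2 + (I₂ s * ω₂ s) ^ 2 + (I₃ s * ω₃ s) ^ 2 := by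
  set F : ℝ → ℝ := fun t =>
    ((I₂ t + I₃ t) * ω₁ t) ^ 2 + (I₂ t * ω₂ t) ^ 2 + (I₃ t * ω₃ t) ^ 2 with hF
  have key : ∀ t, HasDerivAt F 0 t := by
    intro t
    have h2 : I₂ t ≠ 0 := (hI₂pos t).ne'
    have h3 : I₃ t ≠ 0 := (hI₃pos t).ne'
    have h23 : I₂ t + I₃ t ≠ 0 := (add_pos (hI₂pos t) (hI₃pos t)).ne'
    have hd := ((((hI₂ t).add (hI₃ t)).mul (hω₁ t)).pow 2 |>.add
        (((hI₂ t).mul (hω₂ t)).pow 2)).add (((hI₃ t).mul (hω₃ t)).pow 2)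
    refine hd.congr_deriv ?_
    simp only [Pi.add_apply, Pi.mul_apply]
    field_simp
    ring
  intro t s
  have := fun x y => constant_of_has_deriv_right_zero
    (fun z (_ : z ∈ Set.Icc x y) => (key z).continuousAt.continuousWithinAt)
    (fun z _ => (key z).hasDerivWithinAt)
  rcases le_total s t with h | h
  · exact (this s t t ⟨h, le_rfl⟩ ▸ rfl : F t = F s)
  · exact ((this t s s ⟨h, le_rfl⟩).symm ▸ rfl : F t = F s)
end

section
/- Let Ī₂, Ī₃ ∈ ℝ. Consider the flat-disk state equations: for all t, ω₁' = -ω₁/(I₂+I₃)·(u₁+u₂) - ((I₃-I₂)/(I₂+I₃))·ω₂ω₃, ω₂' = -(ω₂/I₂)·u₁ - ω₃ω₁, ω₃' = -(ω₃/I₃)·u₂ + ω₁ω₂, I₂' = u₁, I₃' = u₂, with I₂(t) > 0, I₃(t) > 0. Define the alignment objective V(t) = ½·(ω₂(t)² + ω₃(t)² + (I₂(t)-Ī₂)² + (I₃(t)-Ī₃)²). Then for all t, V'(t) = (-ω₂(t)²/I₂(t) + (I₂(t)-Ī₂))·u₁(t) + (-ω₃(t)²/I₃(t) + (I₃(t)-Ī₃))·u₂(t).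 -/
/-- Along the flat-disk state equations, the alignment objective
`V = ½(ω₂² + ω₃² + (I₂-Ibar₂)² + (I₃-Ibar₃)²)` satisfies
`V' = (-ω₂²/I₂ + (I₂-Ibar₂))u₁ + (-ω₃²/I₃ + (I₃-Ibar₃))u₂`. -/
theorem flat_disk_alignment_objective_derivative
    (Ibar₂ Ibar₃ : ℝ)
    (ω₁ ω₂ ω₃ I₂ I₃ u₁ u₂ : ℝ → ℝ)
    (hI₂pos : ∀ t, 0 < I₂ t) (hI₃pos : ∀ t, 0 < I₃ t)
    (hω₁ : ∀ t, HasDerivAt ω₁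
      (-(ω₁ t) / (I₂ t + I₃ t) * (u₁ t + u₂ t)
        - (I₃ t - I₂ t) / (I₂ t + I₃ t) * (ω₂ t * ω₃ t)) t)
    (hω₂ : ∀ t, HasDerivAt ω₂ (-(ω₂ t / I₂ t) * u₁ t - ω₃ t * ω₁ t) t)
    (hω₃ : ∀ t, HasDerivAt ω₃ (-(ω₃ t / I₃ t) * u₂ t + ω₁ t * ω₂ t) t)
    (hI₂ : ∀ t, HasDerivAt I₂ (u₁ t) t)
    (hI₃ : ∀ t, HasDerivAt I₃ (u₂ t) t) :
    ∀ t, HasDerivAt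
      (fun s => (1 / 2) * (ω₂ s ^ 2 + ω₃ s ^ 2 + (I₂ s - Ibar₂) ^ 2 + (I₃ s - Ibar₃) ^ 2))
      ((-(ω₂ t ^ 2) / I₂ t + (I₂ t - Ibar₂)) * u₁ t
        + (-(ω₃ t ^ 2) / I₃ t + (I₃ t - Ibar₃)) * u₂ t) t := by
  intro t
  have h := (((((hω₂ t).fun_pow 2).fun_add ((hω₃ t).fun_pow 2)).fun_add
      (((hI₂ t).sub_const Ibar₂).fun_pow 2)).fun_add
      (((hI₃ t).sub_const Ibar₃).fun_pow 2)).const_mul (1/2 : ℝ)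
  refine h.congr_deriv ?_
  have h2 := (hI₂pos t).ne'
  have h3 := (hI₃pos t).ne'
  field_simp
  ring
end

section
/- Let Ī₂, Ī₃ ∈ ℝ. Consider the flat-disk state equations with the alignment Lyapunov controller: define a₁(t) = -ω₂(t)²/I₂(t) + (I₂(t)-Ī₂) and a₂(t) = -ω₃(t)²/I₃(t) + (I₃(t)-Ī₃), assume (a₁(t), a₂(t)) ≠ (0,0) for all t, and set u₁(t) = -a₁(t)/√(a₁(t)²+a₂(t)²), u₂(t) = -a₂(t)/√(a₁(t)²+a₂(t)²). Then the alignment objective V(t) = ½·(ω₂(t)² + ω₃(t)² + (I₂(t)-Ī₂)² + (I₃(t)-Ī₃)²) satisfies V'(t) = -√(a₁(t)² + a₂(t)²) < 0 for all t; in particular V is strictly decreasing along the trajectory. -/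
/-- With the alignment Lyapunov controller `u = -(a₁,a₂)/√(a₁²+a₂²)` (where
`a₁ = -ω₂²/I₂ + (I₂-Ibar₂)`, `a₂ = -ω₃²/I₃ + (I₃-Ibar₃)` never both vanish), the alignment
objective `V = ½(ω₂² + ω₃² + (I₂-Ibar₂)² + (I₃-Ibar₃)²)` satisfies `V' = -√(a₁²+a₂²) < 0`;
in particular `V` is strictly decreasing. -/
theorem flat_disk_alignment_controller_decreases_objective
    (Ibar₂ Ibar₃ : ℝ)
    (ω₁ ω₂ ω₃ I₂ I₃ u₁ u₂ a₁ a₂ : ℝ → ℝ)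
    (hI₂pos : ∀ t, 0 < I₂ t) (hI₃pos : ∀ t, 0 < I₃ t)
    (hω₁ : ∀ t, HasDerivAt ω₁
      (-(ω₁ t) / (I₂ t + I₃ t) * (u₁ t + u₂ t)
        - (I₃ t - I₂ t) / (I₂ t + I₃ t) * (ω₂ t * ω₃ t)) t)
    (hω₂ : ∀ t, HasDerivAt ω₂ (-(ω₂ t / I₂ t) * u₁ t - ω₃ t * ω₁ t) t)
    (hω₃ : ∀ t, HasDerivAt ω₃ (-(ω₃ t / I₃ t) * u₂ t + ω₁ t * ω₂ t) t)
    (hI₂ : ∀ t, HasDerivAt I₂ (u₁ t) t)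
    (hI₃ : ∀ t, HasDerivAt I₃ (u₂ t) t)
    (ha₁ : ∀ t, a₁ t = -(ω₂ t ^ 2) / I₂ t + (I₂ t - Ibar₂))
    (ha₂ : ∀ t, a₂ t = -(ω₃ t ^ 2) / I₃ t + (I₃ t - Ibar₃))
    (hne : ∀ t, (a₁ t, a₂ t) ≠ (0, 0))
    (hu₁ : ∀ t, u₁ t = -(a₁ t) / Real.sqrt (a₁ t ^ 2 + a₂ t ^ 2))
    (hu₂ : ∀ t, u₂ t = -(a₂ t) / Real.sqrt (a₁ t ^ 2 + a₂ t ^ 2)) :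
    (∀ t, HasDerivAt
        (fun s => (1 / 2) * (ω₂ s ^ 2 + ω₃ s ^ 2 + (I₂ s - Ibar₂) ^ 2 + (I₃ s - Ibar₃) ^ 2))
        (-Real.sqrt (a₁ t ^ 2 + a₂ t ^ 2)) t
      ∧ -Real.sqrt (a₁ t ^ 2 + a₂ t ^ 2) < 0)
    ∧ StrictAnti
        (fun s => (1 / 2) * (ω₂ s ^ 2 + ω₃ s ^ 2 + (I₂ s - Ibar₂) ^ 2 + (I₃ s - Ibar₃) ^ 2)) := by
  have key : ∀ t, HasDerivAt
      (fun s => (1 / 2) * (ω₂ s ^ 2 + ω₃ s ^ 2 + (I₂ s - Ibar₂) ^ 2 + (I₃ s - Ibar₃) ^ 2))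
      (-Real.sqrt (a₁ t ^ 2 + a₂ t ^ 2)) t ∧
      -Real.sqrt (a₁ t ^ 2 + a₂ t ^ 2) < 0 := by
    intro t
    have hsum : 0 < a₁ t ^ 2 + a₂ t ^ 2 := by
      rcases (show a₁ t ≠ 0 ∨ a₂ t ≠ 0 by
        by_contra h
        push_neg at h
        exact hne t (by simp [h.1, h.2])) with h | h
      · positivity
      · positivity
    have hs : 0 < Real.sqrt (a₁ t ^ 2 + a₂ t ^ 2) := Real.sqrt_pos.mpr hsum
    have hsq : Real.sqrt (a₁ t ^ 2 + a₂ t ^ 2) ^ 2 = a₁ t ^ 2 + a₂ t ^ 2 :=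
      Real.sq_sqrt hsum.le
    have hD : HasDerivAt
        (fun s => (1 / 2) * (ω₂ s ^ 2 + ω₃ s ^ 2 + (I₂ s - Ibar₂) ^ 2 + (I₃ s - Ibar₃) ^ 2))
        ((1 / 2) * ((2 * ω₂ t * (-(ω₂ t / I₂ t) * u₁ t - ω₃ t * ω₁ t)
          + 2 * ω₃ t * (-(ω₃ t / I₃ t) * u₂ t + ω₁ t * ω₂ t))
          + 2 * (I₂ t - Ibar₂) * u₁ t + 2 * (I₃ t - Ibar₃) * u₂ t)) t := by
      exact (((((hω₂ t).pow 2).add ((hω₃ t).pow 2)).add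
        (((hI₂ t).sub_const Ibar₂).pow 2)).add
        (((hI₃ t).sub_const Ibar₃).pow 2)).const_mul (1 / 2) |>.congr_deriv (by ring)
    have hval : (1 / 2) * ((2 * ω₂ t * (-(ω₂ t / I₂ t) * u₁ t - ω₃ t * ω₁ t)
          + 2 * ω₃ t * (-(ω₃ t / I₃ t) * u₂ t + ω₁ t * ω₂ t))
          + 2 * (I₂ t - Ibar₂) * u₁ t + 2 * (I₃ t - Ibar₃) * u₂ t)
        = -Real.sqrt (a₁ t ^ 2 + a₂ t ^ 2) := by
      have h2 : (I₂ t) ≠ 0 := (hI₂pos t).ne'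
      have h3 : (I₃ t) ≠ 0 := (hI₃pos t).ne'
      have e1 : (1 / 2) * ((2 * ω₂ t * (-(ω₂ t / I₂ t) * u₁ t - ω₃ t * ω₁ t)
          + 2 * ω₃ t * (-(ω₃ t / I₃ t) * u₂ t + ω₁ t * ω₂ t))
          + 2 * (I₂ t - Ibar₂) * u₁ t + 2 * (I₃ t - Ibar₃) * u₂ t)
          = a₁ t * u₁ t + a₂ t * u₂ t := by
        rw [ha₁, ha₂]
        field_simp
        ring
      rw [e1, hu₁ t, hu₂ t, ← mul_div_assoc, ← mul_div_assoc, ← add_div,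
        div_eq_iff hs.ne']
      linear_combination hsq
    exact ⟨hval ▸ hD, neg_neg_iff_pos.mpr hs⟩
  refine ⟨key, ?_⟩
  exact strictAnti_of_hasDerivAt_neg (f := fun s => (1 / 2) * (ω₂ s ^ 2 + ω₃ s ^ 2 + (I₂ s - Ibar₂) ^ 2 + (I₃ s - Ibar₃) ^ 2)) (fun t => (key t).1) (fun t => (key t).2)
end

section
/- Let Ī₂, Ī₃ ∈ ℝ. Consider the flat-disk state equations with the alignment Lyapunov controller extended by zero: define a₁(t) = -ω₂(t)²/I₂(t) + (I₂(t)-Ī₂) and a₂(t) = -ω₃(t)²/I₃(t) + (I₃(t)-Ī₃), and set (u₁(t), u₂(t)) = -(a₁(t), a₂(t))/√(a₁(t)²+a₂(t)²) if (a₁(t),a₂(t)) ≠ (0,0) and (u₁(t),u₂(t)) = (0,0) otherwise. Then the alignment objective V(t) = ½·(ω₂(t)² + ω₃(t)² + (I₂(t)-Ī₂)² + (I₃(t)-Ī₃)²) satisfies, at each time t: V'(t) = 0 if and only if -ω₂(t)²/I₂(t) + (I₂(t)-Ī₂) = 0 and -ω₃(t)²/I₃(t) + (I₃(t)-Ī₃)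 = 0. -/
/-- With the alignment Lyapunov controller extended by zero, the derivative of the
alignment objective `V = ½(ω₂² + ω₃² + (I₂-Ibar₂)² + (I₃-Ibar₃)²)` vanishes at time `t`
exactly when `-ω₂²/I₂ + (I₂-Ibar₂) = 0` and `-ω₃²/I₃ + (I₃-Ibar₃) = 0`. -/
theorem flat_disk_alignment_controller_stationary_set
    (Ibar₂ Ibar₃ : ℝ)
    (ω₁ ω₂ ω₃ I₂ I₃ u₁ u₂ a₁ a₂ : ℝ → ℝ)
    (hI₂pos : ∀ t, 0 < I₂ t) (hI₃pos : ∀ t, 0 < I₃ t)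
    (hω₁ : ∀ t, HasDerivAt ω₁
      (-(ω₁ t) / (I₂ t + I₃ t) * (u₁ t + u₂ t)
        - (I₃ t - I₂ t) / (I₂ t + I₃ t) * (ω₂ t * ω₃ t)) t)
    (hω₂ : ∀ t, HasDerivAt ω₂ (-(ω₂ t / I₂ t) * u₁ t - ω₃ t * ω₁ t) t)
    (hω₃ : ∀ t, HasDerivAt ω₃ (-(ω₃ t / I₃ t) * u₂ t + ω₁ t * ω₂ t) t)
    (hI₂ : ∀ t, HasDerivAt I₂ (u₁ t) t)
    (hI₃ : ∀ t, HasDerivAt I₃ (u₂ t) t)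
    (ha₁ : ∀ t, a₁ t = -(ω₂ t ^ 2) / I₂ t + (I₂ t - Ibar₂))
    (ha₂ : ∀ t, a₂ t = -(ω₃ t ^ 2) / I₃ t + (I₃ t - Ibar₃))
    (hu : ∀ t, (u₁ t, u₂ t) =
      if (a₁ t, a₂ t) ≠ (0, 0) then
        (-(a₁ t) / Real.sqrt (a₁ t ^ 2 + a₂ t ^ 2),
         -(a₂ t) / Real.sqrt (a₁ t ^ 2 + a₂ t ^ 2))
      else (0, 0)) :
    ∀ t, deriv
        (fun s => (1 / 2) * (ω₂ s ^ 2 + ω₃ s ^ 2 + (I₂ s - Ibar₂) ^ 2 + (I₃ s - Ibar₃) ^ 2))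
        t = 0
      ↔ (-(ω₂ t ^ 2) / I₂ t + (I₂ t - Ibar₂) = 0
          ∧ -(ω₃ t ^ 2) / I₃ t + (I₃ t - Ibar₃) = 0) := by
  intro t
  have hV : HasDerivAt
      (fun s => (1 / 2) * (ω₂ s ^ 2 + ω₃ s ^ 2 + (I₂ s - Ibar₂) ^ 2 + (I₃ s - Ibar₃) ^ 2))
      (a₁ t * u₁ t + a₂ t * u₂ t) t := by
    have h := (((((hω₂ t).pow 2).add ((hω₃ t).pow 2)).add
        (((hI₂ t).sub_const Ibar₂).pow 2)).add
        (((hI₃ t).sub_const Ibar₃).pow 2)).const_mul (1 / 2 : ℝ)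
    refine h.congr_deriv ?_
    rw [ha₁ t, ha₂ t]
    have h2 : I₂ t ≠ 0 := (hI₂pos t).ne'
    have h3 : I₃ t ≠ 0 := (hI₃pos t).ne'
    field_simp
    ring
  rw [hV.deriv]
  have h := hu t
  by_cases hc : (a₁ t, a₂ t) = ((0 : ℝ), (0 : ℝ))
  · rw [if_neg (not_not.mpr hc)] at h
    have hu1 : u₁ t = 0 := congrArg Prod.fst h
    have hu2 : u₂ t = 0 := congrArg Prod.snd h
    have h1 : a₁ t = 0 := congrArg Prod.fst hc
    have h2 : a₂ t = 0 := congrArg Prod.snd hc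
    rw [ha₁ t] at h1; rw [ha₂ t] at h2
    simp [hu1, hu2, h1, h2]
  · rw [if_pos hc] at h
    have hu1 : u₁ t = -(a₁ t) / Real.sqrt (a₁ t ^ 2 + a₂ t ^ 2) := congrArg Prod.fst h
    have hu2 : u₂ t = -(a₂ t) / Real.sqrt (a₁ t ^ 2 + a₂ t ^ 2) := congrArg Prod.snd h
    have hpos : 0 < a₁ t ^ 2 + a₂ t ^ 2 := by
      have hne : ¬(a₁ t = 0 ∧ a₂ t = 0) := by simpa [Prod.ext_iff] using hc
      rcases not_and_or.mp hne with h' | h'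
      · nlinarith [pow_pos (abs_pos.mpr h') 2, sq_abs (a₁ t), sq_abs (a₂ t), sq_nonneg (a₂ t)]
      · nlinarith [pow_pos (abs_pos.mpr h') 2, sq_abs (a₁ t), sq_abs (a₂ t), sq_nonneg (a₁ t)]
    have hs : 0 < Real.sqrt (a₁ t ^ 2 + a₂ t ^ 2) := Real.sqrt_pos.mpr hpos
    constructor
    · intro hzero
      exfalso
      rw [hu1, hu2] at hzero
      have : a₁ t * (-(a₁ t) / Real.sqrt (a₁ t ^ 2 + a₂ t ^ 2)) +
          a₂ t * (-(a₂ t) / Real.sqrt (a₁ t ^ 2 + a₂ t ^ 2)) =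
          -(a₁ t ^ 2 + a₂ t ^ 2) / Real.sqrt (a₁ t ^ 2 + a₂ t ^ 2) := by ring
      rw [this] at hzero
      have := div_eq_zero_iff.mp hzero
      rcases this with h' | h'
      · linarith
      · linarith
    · intro ⟨h1, h2⟩
      exfalso
      exact hc (by rw [ha₁ t, ha₂ t]; simp [h1, h2])
end

section
/- Let Ī₂, Ī₃ ∈ ℝ. Consider the flat-disk state equations: for all t, ω₁' = -ω₁/(I₂+I₃)·(u₁+u₂) - ((I₃-I₂)/(I₂+I₃))·ω₂ω₃, ω₂' = -(ω₂/I₂)·u₁ - ω₃ω₁, ω₃' = -(ω₃/I₃)·u₂ + ω₁ω₂, I₂' = u₁, I₃' = u₂, with I₂(t) > 0, I₃(t) > 0. Define the mechanical energy V(t) = ½·(I₂(t)+I₃(t))·ω₁(t)² + ½·I₂(t)·ω₂(t)² + ½·I₃(t)·ω₃(t)² + ½·(I₂(t)-Ī₂)² + ½·(I₃(t)-Ī₃)². Then for all t, V'(t) = (-½ω₁(t)² - ½ω₂(t)² + (I₂(t)-Ī₂))·u₁(t) + (-½ω₁(t)² - ½ω₃(t)² + (I₃(t)-Ī₃))·u₂(t).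 -/
/-- Along the flat-disk state equations, the mechanical energy
`V = ½(I₂+I₃)ω₁² + ½I₂ω₂² + ½I₃ω₃² + ½(I₂-Ibar₂)² + ½(I₃-Ibar₃)²` satisfies
`V' = (-½ω₁² - ½ω₂² + (I₂-Ibar₂))u₁ + (-½ω₁² - ½ω₃² + (I₃-Ibar₃))u₂`. -/
theorem flat_disk_mechanical_energy_derivative
    (Ibar₂ Ibar₃ : ℝ)
    (ω₁ ω₂ ω₃ I₂ I₃ u₁ u₂ : ℝ → ℝ)
    (hI₂pos : ∀ t, 0 < I₂ t) (hI₃pos : ∀ t, 0 < I₃ t)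
    (hω₁ : ∀ t, HasDerivAt ω₁
      (-(ω₁ t) / (I₂ t + I₃ t) * (u₁ t + u₂ t)
        - (I₃ t - I₂ t) / (I₂ t + I₃ t) * (ω₂ t * ω₃ t)) t)
    (hω₂ : ∀ t, HasDerivAt ω₂ (-(ω₂ t / I₂ t) * u₁ t - ω₃ t * ω₁ t) t)
    (hω₃ : ∀ t, HasDerivAt ω₃ (-(ω₃ t / I₃ t) * u₂ t + ω₁ t * ω₂ t) t)
    (hI₂ : ∀ t, HasDerivAt I₂ (u₁ t) t)
    (hI₃ : ∀ t, HasDerivAt I₃ (u₂ t) t) :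
    ∀ t, HasDerivAt
      (fun s => (1 / 2) * (I₂ s + I₃ s) * ω₁ s ^ 2 + (1 / 2) * I₂ s * ω₂ s ^ 2
        + (1 / 2) * I₃ s * ω₃ s ^ 2 + (1 / 2) * (I₂ s - Ibar₂) ^ 2
        + (1 / 2) * (I₃ s - Ibar₃) ^ 2)
      ((-(1 / 2) * ω₁ t ^ 2 - (1 / 2) * ω₂ t ^ 2 + (I₂ t - Ibar₂)) * u₁ t
        + (-(1 / 2) * ω₁ t ^ 2 - (1 / 2) * ω₃ t ^ 2 + (I₃ t - Ibar₃)) * u₂ t) t := by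
  intro t
  have h2 : (I₂ t) ≠ 0 := (hI₂pos t).ne'
  have h3 : (I₃ t) ≠ 0 := (hI₃pos t).ne'
  have hs : (I₂ t + I₃ t) ≠ 0 := (add_pos (hI₂pos t) (hI₃pos t)).ne'
  have H := ((((((hI₂ t).add (hI₃ t)).const_mul ((1:ℝ)/2)).mul ((hω₁ t).pow 2)).add
      (((hI₂ t).const_mul ((1:ℝ)/2)).mul ((hω₂ t).pow 2))).add
      (((hI₃ t).const_mul ((1:ℝ)/2)).mul ((hω₃ t).pow 2))).add
      ((((hI₂ t).sub_const Ibar₂).pow 2).const_mul ((1:ℝ)/2)) |>.add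
      ((((hI₃ t).sub_const Ibar₃).pow 2).const_mul ((1:ℝ)/2))
  convert H using 1
  · rfl
  · rfl
  · rfl
  simp only [Pi.add_apply, Pi.pow_apply]
  field_simp
  ring
end

section
/- Let Ī₂, Ī₃ ∈ ℝ. Consider the flat-disk state equations with the passivity Lyapunov controller: define b₁(t) = -½ω₁(t)² - ½ω₂(t)² + (I₂(t)-Ī₂) and b₂(t) = -½ω₁(t)² - ½ω₃(t)² + (I₃(t)-Ī₃), assume (b₁(t), b₂(t)) ≠ (0,0) for all t, and set u₁(t) = -b₁(t)/√(b₁(t)²+b₂(t)²), u₂(t) = -b₂(t)/√(b₁(t)²+b₂(t)²). Then the mechanical energy V(t) = ½·(I₂(t)+I₃(t))·ω₁(t)² + ½·I₂(t)·ω₂(t)² + ½·I₃(t)·ω₃(t)² + ½·(I₂(t)-Ī₂)² + ½·(I₃(t)-Ī₃)² satisfies V'(t) = -√(b₁(t)² + b₂(t)²) < 0 for all t; in particular V is strictly decreasing along the trajectory. -/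
lemma flat_disk_aux (A B C w1 w2 w3 u1 u2 J2 J3 : ℝ) (hA : A ≠ 0) (hB : B ≠ 0) (hC : C ≠ 0) :
    (1/2)*(u1+u2)*w1^2 + (1/2)*C*(2*w1^1*(-w1/C*(u1+u2) - (B-A)/C*(w2*w3)))
      + ((1/2)*u1*w2^2 + (1/2)*A*(2*w2^1*(-(w2/A)*u1 - w3*w1)))
      + ((1/2)*u2*w3^2 + (1/2)*B*(2*w3^1*(-(w3/B)*u2 + w1*w2)))
      + (1/2)*(2*(A-J2)^1*u1) + (1/2)*(2*(B-J3)^1*u2)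
    = (-(1/2)*w1^2 - (1/2)*w2^2 + (A-J2))*u1 + (-(1/2)*w1^2 - (1/2)*w3^2 + (B-J3))*u2
      := by
  field_simp
  ring

/-- With the passivity Lyapunov controller `u = -(b₁,b₂)/√(b₁²+b₂²)` (where
`b₁ = -½ω₁² - ½ω₂² + (I₂-Ibar₂)`, `b₂ = -½ω₁² - ½ω₃² + (I₃-Ibar₃)` never both vanish), the
mechanical energy `V = ½(I₂+I₃)ω₁² + ½I₂ω₂² + ½I₃ω₃² + ½(I₂-Ibar₂)² + ½(I₃-Ibar₃)²`
satisfies `V' = -√(b₁²+b₂²) < 0`; in particular `V` is strictly decreasing. -/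
theorem flat_disk_passivity_controller_decreases_energy
    (Ibar₂ Ibar₃ : ℝ)
    (ω₁ ω₂ ω₃ I₂ I₃ u₁ u₂ b₁ b₂ : ℝ → ℝ)
    (hI₂pos : ∀ t, 0 < I₂ t) (hI₃pos : ∀ t, 0 < I₃ t)
    (hω₁ : ∀ t, HasDerivAt ω₁
      (-(ω₁ t) / (I₂ t + I₃ t) * (u₁ t + u₂ t)
        - (I₃ t - I₂ t) / (I₂ t + I₃ t) * (ω₂ t * ω₃ t)) t)
    (hω₂ : ∀ t, HasDerivAt ω₂ (-(ω₂ t / I₂ t) * u₁ t - ω₃ t * ω₁ t) t)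
    (hω₃ : ∀ t, HasDerivAt ω₃ (-(ω₃ t / I₃ t) * u₂ t + ω₁ t * ω₂ t) t)
    (hI₂ : ∀ t, HasDerivAt I₂ (u₁ t) t)
    (hI₃ : ∀ t, HasDerivAt I₃ (u₂ t) t)
    (hb₁ : ∀ t, b₁ t = -(1 / 2) * ω₁ t ^ 2 - (1 / 2) * ω₂ t ^ 2 + (I₂ t - Ibar₂))
    (hb₂ : ∀ t, b₂ t = -(1 / 2) * ω₁ t ^ 2 - (1 / 2) * ω₃ t ^ 2 + (I₃ t - Ibar₃))
    (hne : ∀ t, (b₁ t, b₂ t) ≠ (0, 0))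
    (hu₁ : ∀ t, u₁ t = -(b₁ t) / Real.sqrt (b₁ t ^ 2 + b₂ t ^ 2))
    (hu₂ : ∀ t, u₂ t = -(b₂ t) / Real.sqrt (b₁ t ^ 2 + b₂ t ^ 2)) :
    (∀ t, HasDerivAt
        (fun s => (1 / 2) * (I₂ s + I₃ s) * ω₁ s ^ 2 + (1 / 2) * I₂ s * ω₂ s ^ 2
          + (1 / 2) * I₃ s * ω₃ s ^ 2 + (1 / 2) * (I₂ s - Ibar₂) ^ 2
          + (1 / 2) * (I₃ s - Ibar₃) ^ 2)
        (-Real.sqrt (b₁ t ^ 2 + b₂ t ^ 2)) t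
      ∧ -Real.sqrt (b₁ t ^ 2 + b₂ t ^ 2) < 0)
    ∧ StrictAnti
        (fun s => (1 / 2) * (I₂ s + I₃ s) * ω₁ s ^ 2 + (1 / 2) * I₂ s * ω₂ s ^ 2
          + (1 / 2) * I₃ s * ω₃ s ^ 2 + (1 / 2) * (I₂ s - Ibar₂) ^ 2
          + (1 / 2) * (I₃ s - Ibar₃) ^ 2) := by
  have key : ∀ t, HasDerivAt
      (fun s => (1 / 2) * (I₂ s + I₃ s) * ω₁ s ^ 2 + (1 / 2) * I₂ s * ω₂ s ^ 2
        + (1 / 2) * I₃ s * ω₃ s ^ 2 + (1 / 2) * (I₂ s - Ibar₂) ^ 2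
        + (1 / 2) * (I₃ s - Ibar₃) ^ 2)
      (-Real.sqrt (b₁ t ^ 2 + b₂ t ^ 2)) t := by
    intro t
    have hsum : I₂ t + I₃ t ≠ 0 := by have := hI₂pos t; have := hI₃pos t; linarith
    have hb2pos : 0 < b₁ t ^ 2 + b₂ t ^ 2 := by
      rcases lt_or_eq_of_le (by positivity : (0:ℝ) ≤ b₁ t ^ 2 + b₂ t ^ 2) with h | h
      · exact h
      · exfalso
        apply hne t
        have h1 : b₁ t = 0 := by nlinarith [sq_nonneg (b₁ t), sq_nonneg (b₂ t)]
        have h2 : b₂ t = 0 := by nlinarith [sq_nonneg (b₁ t), sq_nonneg (b₂ t)]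
        simp [h1, h2]
    have hs : 0 < Real.sqrt (b₁ t ^ 2 + b₂ t ^ 2) := Real.sqrt_pos.mpr hb2pos
    have hs2 : Real.sqrt (b₁ t ^ 2 + b₂ t ^ 2) ^ 2 = b₁ t ^ 2 + b₂ t ^ 2 :=
      Real.sq_sqrt hb2pos.le
    have hD : HasDerivAt
        (fun s => (1 / 2) * (I₂ s + I₃ s) * ω₁ s ^ 2 + (1 / 2) * I₂ s * ω₂ s ^ 2
          + (1 / 2) * I₃ s * ω₃ s ^ 2 + (1 / 2) * (I₂ s - Ibar₂) ^ 2
          + (1 / 2) * (I₃ s - Ibar₃) ^ 2)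
        ((1 / 2) * (u₁ t + u₂ t) * ω₁ t ^ 2
          + (1 / 2) * (I₂ t + I₃ t) * (2 * ω₁ t ^ 1 *
            (-(ω₁ t) / (I₂ t + I₃ t) * (u₁ t + u₂ t)
              - (I₃ t - I₂ t) / (I₂ t + I₃ t) * (ω₂ t * ω₃ t)))
          + ((1 / 2) * (u₁ t) * ω₂ t ^ 2
            + (1 / 2) * I₂ t * (2 * ω₂ t ^ 1 * (-(ω₂ t / I₂ t) * u₁ t - ω₃ t * ω₁ t)))
          + ((1 / 2) * (u₂ t) * ω₃ t ^ 2
            + (1 / 2) * I₃ t * (2 * ω₃ t ^ 1 * (-(ω₃ t / I₃ t) * u₂ t + ω₁ t * ω₂ t)))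
          + (1 / 2) * (2 * (I₂ t - Ibar₂) ^ 1 * u₁ t)
          + (1 / 2) * (2 * (I₃ t - Ibar₃) ^ 1 * u₂ t)) t := by
      exact (((((((hI₂ t).add (hI₃ t)).const_mul (1/2)).mul ((hω₁ t).pow 2)).add
        (((hI₂ t).const_mul (1/2)).mul ((hω₂ t).pow 2))).add
        (((hI₃ t).const_mul (1/2)).mul ((hω₃ t).pow 2))).add
        ((((hI₂ t).sub_const Ibar₂).pow 2).const_mul (1/2))).add
        ((((hI₃ t).sub_const Ibar₃).pow 2).const_mul (1/2))
    convert hD using 1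
    have step1 : (1 / 2) * (u₁ t + u₂ t) * ω₁ t ^ 2
          + (1 / 2) * (I₂ t + I₃ t) * (2 * ω₁ t ^ 1 *
            (-(ω₁ t) / (I₂ t + I₃ t) * (u₁ t + u₂ t)
              - (I₃ t - I₂ t) / (I₂ t + I₃ t) * (ω₂ t * ω₃ t)))
          + ((1 / 2) * (u₁ t) * ω₂ t ^ 2
            + (1 / 2) * I₂ t * (2 * ω₂ t ^ 1 * (-(ω₂ t / I₂ t) * u₁ t - ω₃ t * ω₁ t)))
          + ((1 / 2) * (u₂ t) * ω₃ t ^ 2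
            + (1 / 2) * I₃ t * (2 * ω₃ t ^ 1 * (-(ω₃ t / I₃ t) * u₂ t + ω₁ t * ω₂ t)))
          + (1 / 2) * (2 * (I₂ t - Ibar₂) ^ 1 * u₁ t)
          + (1 / 2) * (2 * (I₃ t - Ibar₃) ^ 1 * u₂ t)
        = b₁ t * u₁ t + b₂ t * u₂ t := by
      rw [hb₁ t, hb₂ t]
      linear_combination flat_disk_aux (I₂ t) (I₃ t) (I₂ t + I₃ t) (ω₁ t) (ω₂ t) (ω₃ t)
        (u₁ t) (u₂ t) Ibar₂ Ibar₃ (hI₂pos t).ne' (hI₃pos t).ne' hsum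
    rw [step1, hu₁ t, hu₂ t]
    field_simp
    linarith [hs2]
  refine ⟨fun t => ⟨key t, ?_⟩, ?_⟩
  · have hb2pos : 0 < b₁ t ^ 2 + b₂ t ^ 2 := by
      rcases lt_or_eq_of_le (by positivity : (0:ℝ) ≤ b₁ t ^ 2 + b₂ t ^ 2) with h | h
      · exact h
      · exfalso
        apply hne t
        have h1 : b₁ t = 0 := by nlinarith [sq_nonneg (b₁ t), sq_nonneg (b₂ t)]
        have h2 : b₂ t = 0 := by nlinarith [sq_nonneg (b₁ t), sq_nonneg (b₂ t)]
        simp [h1, h2]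
    simpa using Real.sqrt_pos.mpr hb2pos
  · apply strictAnti_of_deriv_neg
    intro t
    rw [(key t).deriv]
    have hb2pos : 0 < b₁ t ^ 2 + b₂ t ^ 2 := by
      rcases lt_or_eq_of_le (by positivity : (0:ℝ) ≤ b₁ t ^ 2 + b₂ t ^ 2) with h | h
      · exact h
      · exfalso
        apply hne t
        have h1 : b₁ t = 0 := by nlinarith [sq_nonneg (b₁ t), sq_nonneg (b₂ t)]
        have h2 : b₂ t = 0 := by nlinarith [sq_nonneg (b₁ t), sq_nonneg (b₂ t)]
        simp [h1, h2]
    simpa using Real.sqrt_pos.mpr hb2pos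
end
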